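/- The subgroup Γ of SL(2,ℤ) generated by the matrices T³ = [[1,3],[0,1]] and T' = [[1,0],[-1,1]] is equal to the full congruence subgroup Γ♭(3) = { [[a,b],[c,d]] ∈ SL(2,ℤ) : b ≡ 0 (mod 3), a ≡ 1 (mod 3), d ≡ 1 (mod 3) }. -/

import Mathlib

open Matrix

/-- The matrix `T³ = [[1,3],[0,1]]` in `SL(2,ℤ)`. -/
def Tcubed : SpecialLinearGroup (Fin 2) ℤ :=
  ⟨!![1, 3; 0, 1], by norm_num [Matrix.det_fin_two_of]⟩

/-- The matrix `T' = S T S⁻¹ = [[1,0],[-1,1]]` in `SL(2,ℤ)`. -/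
def Tprime : SpecialLinearGroup (Fin 2) ℤ :=
  ⟨!![1, 0; -1, 1], by norm_num [Matrix.det_fin_two_of]⟩

/-- The subgroup `Γ♭(3)` of `SL(2,ℤ)`, consisting of the matrices `[[a,b],[c,d]]` with
`b ≡ 0 (mod 3)` and `a ≡ d ≡ 1 (mod 3)`. -/
def GammaFlat : Subgroup (SpecialLinearGroup (Fin 2) ℤ) where
  carrier := {A | A.1 0 1 ≡ 0 [ZMOD 3] ∧ A.1 0 0 ≡ 1 [ZMOD 3] ∧ A.1 1 1 ≡ 1 [ZMOD 3]}
  one_mem' := by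
    refine ⟨?_, ?_, ?_⟩ <;> simp [SpecialLinearGroup.coe_one, Matrix.one_apply]
  mul_mem' := by
    rintro A B ⟨hb, ha, hd⟩ ⟨hb', ha', hd'⟩
    have e : ∀ i j : Fin 2, ((A * B).1) i j = A.1 i 0 * B.1 0 j + A.1 i 1 * B.1 1 j := by
      intro i j
      change ((A : Matrix (Fin 2) (Fin 2) ℤ) * (B : Matrix (Fin 2) (Fin 2) ℤ)) i j = _
      rw [Matrix.mul_apply, Fin.sum_univ_two]
    refine ⟨?_, ?_, ?_⟩
    · show ((A * B).1) 0 1 ≡ 0 [ZMOD 3]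
      rw [e]
      simpa using (ha.mul hb').add (hb.mul hd')
    · show ((A * B).1) 0 0 ≡ 1 [ZMOD 3]
      rw [e]
      simpa using (ha.mul ha').add (hb.mul (Int.ModEq.refl (B.1 1 0)))
    · show ((A * B).1) 1 1 ≡ 1 [ZMOD 3]
      rw [e]
      simpa using ((Int.ModEq.refl (A.1 1 0)).mul hb').add (hd.mul hd')
  inv_mem' := by
    rintro A ⟨hb, ha, hd⟩
    show _ ∧ _ ∧ _
    rw [SpecialLinearGroup.SL2_inv_expl]
    refine ⟨?_, ?_, ?_⟩
    · simpa using hb.neg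
    · exact hd
    · exact ha

/-!
Multiplying `[[a,b],[c,d]] ∈ Γ♭(3)` on the left by a power of `T³` changes `a` by an arbitrary
multiple of `3c`, and by a power of `T'` changes `c` by an arbitrary multiple of `a`. Since
`a ≡ 1 (mod 3)` never vanishes, alternating the two balanced divisions shrinks `|c|` by a factor
`3/4`, so this Euclidean descent ends at `c = 0`, where `a = d = 1` and the matrix is a power of `T³`.
-/

open ModularGroup MatrixGroups

lemma Int.exists_two_mul_abs_sub_mul_le (a : ℤ) {d : ℤ} (hd : d ≠ 0) :
    ∃ q : ℤ, 2 * |a - q * d| ≤ |d| := by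
  have hm : 0 < d.natAbs := Int.natAbs_pos.mpr hd
  obtain ⟨q, hq⟩ := Int.natAbs_dvd.mp (Int.dvd_self_sub_bmod (x := a) (m := d.natAbs))
  refine ⟨q, ?_⟩
  have h_lower := Int.le_bmod (x := a) hm
  have h_upper := Int.bmod_le (x := a) hm
  rw [show a - q * d = a.bmod d.natAbs by rw [mul_comm]; omega, ← Int.natCast_natAbs,
    ← Int.natCast_natAbs]
  omega

lemma Tcubed_eq : Tcubed = T ^ 3 := by decide

lemma Tprime_eq : Tprime = S * T * S⁻¹ := by decide

lemma coe_Tcubed_zpow (n : ℤ) :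
    ((Tcubed ^ n : SL(2, ℤ)) : Matrix (Fin 2) (Fin 2) ℤ) = !![1, 3 * n; 0, 1] := by
  rw [Tcubed_eq, ← zpow_natCast, ← _root_.zpow_mul, coe_T_zpow]
  rfl

lemma coe_Tprime_zpow (m : ℤ) :
    ((Tprime ^ m : SL(2, ℤ)) : Matrix (Fin 2) (Fin 2) ℤ) = !![1, 0; -m, 1] := by
  rw [Tprime_eq, conj_zpow]
  simp [coe_T_zpow, Matrix.adjugate_fin_two]

lemma Tcubed_zpow_mul_apply_zero_zero (n : ℤ) (A : SL(2, ℤ)) :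
    (Tcubed ^ n * A) 0 0 = A 0 0 + 3 * n * A 1 0 := by
  simp [coe_Tcubed_zpow, Matrix.mul_apply]

lemma Tcubed_zpow_mul_apply_one_zero (n : ℤ) (A : SL(2, ℤ)) :
    (Tcubed ^ n * A) 1 0 = A 1 0 := by
  simp [coe_Tcubed_zpow, Matrix.mul_apply]

lemma Tprime_zpow_mul_apply_one_zero (m : ℤ) (A : SL(2, ℤ)) :
    (Tprime ^ m * A) 1 0 = A 1 0 - m * A 0 0 := by
  simp [coe_Tprime_zpow, Matrix.mul_apply]
  ring

lemma Tcubed_mem_GammaFlat : Tcubed ∈ GammaFlat := ⟨by decide, by decide, by decide⟩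

lemma Tprime_mem_GammaFlat : Tprime ∈ GammaFlat := ⟨by decide, by decide, by decide⟩

lemma closure_Tcubed_Tprime_le_GammaFlat : Subgroup.closure {Tcubed, Tprime} ≤ GammaFlat := by
  rw [Subgroup.closure_le, Set.insert_subset_iff, Set.singleton_subset_iff]
  exact ⟨Tcubed_mem_GammaFlat, Tprime_mem_GammaFlat⟩

lemma apply_zero_zero_ne_zero_of_mem_GammaFlat {A : SL(2, ℤ)} (hA : A ∈ GammaFlat) :
    A 0 0 ≠ 0 := by
  have h : A 0 0 ≡ 1 [ZMOD 3] := hA.2.1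
  unfold Int.ModEq at h
  omega

lemma eq_Tcubed_zpow_of_mem_GammaFlat {A : SL(2, ℤ)} (hA : A ∈ GammaFlat) (hc : A 1 0 = 0) :
    A = Tcubed ^ (A 0 1 / 3) := by
  obtain ⟨hb, ha, hd⟩ : A 0 1 % 3 = 0 ∧ A 0 0 % 3 = 1 ∧ A 1 1 % 3 = 1 := hA
  have hdet : A 0 0 * A 1 1 = 1 := by
    simpa [hc] using (Matrix.det_fin_two _).symm.trans A.det_coe
  have ha1 : A 0 0 = 1 := by
    rcases Int.eq_one_or_neg_one_of_mul_eq_one hdet with h | h <;> omega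
  have hd1 : A 1 1 = 1 := by simpa [ha1] using hdet
  ext i j
  fin_cases i <;> fin_cases j <;>
    simp [coe_Tcubed_zpow, ha1, hd1, hc, Int.mul_ediv_cancel' (Int.dvd_of_emod_eq_zero hb)]

lemma exists_natAbs_Tprime_zpow_mul_Tcubed_zpow_mul_apply_one_zero_lt {A : SL(2, ℤ)}
    (hA : A ∈ GammaFlat) (hc : A 1 0 ≠ 0) :
    ∃ m n : ℤ, ((Tprime ^ m * (Tcubed ^ n * A)) 1 0).natAbs < (A 1 0).natAbs := by
  obtain ⟨q, hq⟩ := Int.exists_two_mul_abs_sub_mul_le (A 0 0) (d := 3 * A 1 0) (by omega)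
  set B := Tcubed ^ (-q) * A with hB
  have hB00 : B 0 0 = A 0 0 - q * (3 * A 1 0) := by
    rw [hB, Tcubed_zpow_mul_apply_zero_zero]
    ring
  have hB10 : B 1 0 = A 1 0 := Tcubed_zpow_mul_apply_one_zero _ _
  have hBne : B 0 0 ≠ 0 :=
    apply_zero_zero_ne_zero_of_mem_GammaFlat (mul_mem (zpow_mem Tcubed_mem_GammaFlat _) hA)
  obtain ⟨m, hm⟩ := Int.exists_two_mul_abs_sub_mul_le (B 1 0) hBne
  refine ⟨m, -q, ?_⟩
  rw [← Int.ofNat_lt, Int.natCast_natAbs, Int.natCast_natAbs, Tprime_zpow_mul_apply_one_zero]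
  rw [← hB00, abs_mul, abs_of_pos (by norm_num : (0 : ℤ) < 3)] at hq
  rw [hB10] at hm ⊢
  -- `4 |c - m a'| ≤ 2 |a'| ≤ 3 |c| < 4 |c|`, where `a' = B 0 0`
  have := abs_pos.mpr hc
  linarith

lemma mem_closure_Tcubed_Tprime_of_mem_GammaFlat {A : SL(2, ℤ)} (hA : A ∈ GammaFlat) :
    A ∈ Subgroup.closure {Tcubed, Tprime} := by
  have hTcubed : Tcubed ∈ Subgroup.closure {Tcubed, Tprime} := Subgroup.subset_closure (by simp)
  have hTprime : Tprime ∈ Subgroup.closure {Tcubed, Tprime} := Subgroup.subset_closure (by simp)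
  induction h : (A 1 0).natAbs using Nat.strong_induction_on generalizing A with
  | _ k ih =>
    by_cases hc : A 1 0 = 0
    · rw [eq_Tcubed_zpow_of_mem_GammaFlat hA hc]
      exact zpow_mem hTcubed _
    obtain ⟨m, n, hlt⟩ := exists_natAbs_Tprime_zpow_mul_Tcubed_zpow_mul_apply_one_zero_lt hA hc
    have hB := ih _ (h ▸ hlt)
      (mul_mem (zpow_mem Tprime_mem_GammaFlat m) (mul_mem (zpow_mem Tcubed_mem_GammaFlat n) hA)) rfl
    rwa [Subgroup.mul_mem_cancel_left _ (zpow_mem hTprime m),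
      Subgroup.mul_mem_cancel_left _ (zpow_mem hTcubed n)] at hB

/-- The subgroup of `SL(2,ℤ)` generated by `T³ = [[1,3],[0,1]]` and `T' = [[1,0],[-1,1]]`
is equal to the full congruence subgroup
`Γ♭(3) = { [[a,b],[c,d]] ∈ SL(2,ℤ) : b ≡ 0, a ≡ d ≡ 1 (mod 3) }`. -/
theorem winger_monodromy_eq_GammaFlat :
    Subgroup.closure {Tcubed, Tprime} = GammaFlat :=
  le_antisymm closure_Tcubed_Tprime_le_GammaFlat fun _ ↦ mem_closure_Tcubed_Tprime_of_mem_GammaFlat
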